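/- Let N ≥ 5 and let ν be the ℝ-algebra automorphism of F = ℝ(B_1,…,B_N) determined by ν(B_l) = B_{N+1−l} (indices modulo N). Then for all i, j ∈ {1,…,N}: {ν(B_i), ν(B_j)}_{S2} = −ν({B_i, B_j}_{S2}) and {ν(B_i), ν(B_j)}_{C2N} = −ν({B_i, B_j}_{C2N}). -/
import Mathlib


noncomputable section

/-- The field `F = ℝ(B_1, …, B_N)` of rational functions in `N` variables
indexed by `ZMod N` (indices read modulo `N`). -/
abbrev RatF (N : ℕ) : Type := FractionRing (MvPolynomial (ZMod N) ℝ)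

/-- The generator `B_i` of `ℝ(B_1, …, B_N)`. -/
noncomputable def Bgen (N : ℕ) (i : ZMod N) : RatF N :=
  algebraMap (MvPolynomial (ZMod N) ℝ) (RatF N) (MvPolynomial.X i)

set_option maxHeartbeats 1000000 in
/-- The reflection automorphism `ν : B_l ↦ B_{N+1−l}` of `ℝ(B_1, …, B_N)`
anti-intertwines both brackets `{·,·}_{S2}` and `{·,·}_{C2N}` on the generators. -/
theorem brackets_antiequivariant_under_reflection (N : ℕ) (hN : 5 ≤ N)
    (bC bS : RatF N → RatF N → RatF N)
    -- `{·,·}_{C2N}` is ℝ-bilinear, antisymmetric, and a derivation in each argument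
    (hC_add : ∀ x y z : RatF N, bC (x + y) z = bC x z + bC y z)
    (hC_smul : ∀ (c : ℝ) (x y : RatF N), bC (c • x) y = c • bC x y)
    (hC_anti : ∀ x y : RatF N, bC x y = - bC y x)
    (hC_leib : ∀ x y z : RatF N, bC (x * y) z = x * bC y z + y * bC x z)
    (hC_gen1 : ∀ k : ZMod N,
      bC (Bgen N k) (Bgen N (k + 1)) =
        Bgen N k * Bgen N (k + 1) - Bgen N k - Bgen N (k + 1))
    (hC_gen2 : ∀ k : ZMod N,
      bC (Bgen N k) (Bgen N (k + 2)) =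
        - (Bgen N k * Bgen N (k + 2)) / Bgen N (k + 1))
    (hC_gen0 : ∀ i j : ZMod N,
      j - i ≠ 1 → j - i ≠ -1 → j - i ≠ 2 → j - i ≠ -2 → bC (Bgen N i) (Bgen N j) = 0)
    -- `{·,·}_{S2}` is ℝ-bilinear, antisymmetric, and a derivation in each argument
    (hS_add : ∀ x y z : RatF N, bS (x + y) z = bS x z + bS y z)
    (hS_smul : ∀ (c : ℝ) (x y : RatF N), bS (c • x) y = c • bS x y)
    (hS_anti : ∀ x y : RatF N, bS x y = - bS y x)
    (hS_leib : ∀ x y z : RatF N, bS (x * y) z = x * bS y z + y * bS x z)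
    (hS_gen : ∀ i j : ZMod N,
      bS (Bgen N i) (Bgen N j) =
        ((if i + 1 = j then (1 : ℝ) else 0) - (if i - 1 = j then (1 : ℝ) else 0)) •
          (Bgen N i * Bgen N j))
    -- the reflection automorphism `ν`
    (ν : RatF N ≃ₐ[ℝ] RatF N)
    (hν : ∀ l : ZMod N, ν (Bgen N l) = Bgen N ((N : ZMod N) + 1 - l)) :
    ∀ i j : ZMod N,
      bS (ν (Bgen N i)) (ν (Bgen N j)) = - ν (bS (Bgen N i) (Bgen N j)) ∧
      bC (ν (Bgen N i)) (ν (Bgen N j)) = - ν (bC (Bgen N i) (Bgen N j)) := by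
  have hsm : ∀ (c : ℝ) (x : RatF N), ν (c • x) = c • ν x :=
    fun c x => ν.toLinearMap.map_smul c x

  have hν' : ∀ l : ZMod N, ν (Bgen N l) = Bgen N (1 - l) := by
    intro l; rw [hν l, ZMod.natCast_self, zero_add]
  intro i j
  constructor
  · -- S2 bracket
    rw [hν' i, hν' j, hS_gen, hS_gen i j, hsm, map_mul, hν' i, hν' j]
    have h1 : ((1 - i) + 1 = 1 - j) ↔ (i - 1 = j) :=
      ⟨fun h => by linear_combination -h, fun h => by linear_combination -h⟩
    have h2 : ((1 - i) - 1 = 1 - j) ↔ (i + 1 = j) :=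
      ⟨fun h => by linear_combination -h, fun h => by linear_combination -h⟩
    rw [if_congr h1 rfl rfl, if_congr h2 rfl rfl, ← neg_smul]
    congr 1
    ring
  · -- C2N bracket
    by_cases hd1 : j - i = 1
    · have hj : j = i + 1 := by linear_combination hd1
      subst hj
      rw [hν' i, hν' (i + 1), hC_anti]
      have e : (1 : ZMod N) - (i + 1) + 1 = 1 - i := by ring
      have h := hC_gen1 (1 - (i + 1))
      rw [e] at h
      rw [h, hC_gen1 i, map_sub, map_sub, map_mul, hν' i, hν' (i + 1)]
      ring
    · by_cases hdm1 : j - i = -1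
      · have hi : i = j + 1 := by linear_combination -hdm1
        subst hi
        rw [hν' (j + 1), hν' j]
        have e : (1 : ZMod N) - (j + 1) + 1 = 1 - j := by ring
        have h := hC_gen1 (1 - (j + 1))
        rw [e] at h
        rw [h, hC_anti (Bgen N (j + 1)) (Bgen N j), hC_gen1 j, map_neg,
          map_sub, map_sub, map_mul, hν' j, hν' (j + 1)]
        ring
      · by_cases hd2 : j - i = 2
        · have hj : j = i + 2 := by linear_combination hd2
          subst hj
          rw [hν' i, hν' (i + 2), hC_anti]
          have e2 : (1 : ZMod N) - (i + 2) + 2 = 1 - i := by ring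
          have e1 : (1 : ZMod N) - (i + 2) + 1 = 1 - (i + 1) := by ring
          have h := hC_gen2 (1 - (i + 2))
          rw [e2, e1] at h
          rw [h, hC_gen2 i, map_div₀, map_neg, map_mul, hν' i, hν' (i + 1), hν' (i + 2)]
          ring
        · by_cases hdm2 : j - i = -2
          · have hi : i = j + 2 := by linear_combination -hdm2
            subst hi
            rw [hν' (j + 2), hν' j]
            have e2 : (1 : ZMod N) - (j + 2) + 2 = 1 - j := by ring
            have e1 : (1 : ZMod N) - (j + 2) + 1 = 1 - (j + 1) := by ring
            have h := hC_gen2 (1 - (j + 2))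
            rw [e2, e1] at h
            rw [h, hC_anti (Bgen N (j + 2)) (Bgen N j), hC_gen2 j, map_neg,
              map_div₀, map_neg, map_mul, hν' j, hν' (j + 1), hν' (j + 2)]
            ring
          · rw [hν' i, hν' j,
              hC_gen0 (1 - i) (1 - j)
                (fun h => hdm1 (by linear_combination -h))
                (fun h => hd1 (by linear_combination -h))
                (fun h => hdm2 (by linear_combination -h))
                (fun h => hd2 (by linear_combination -h)),
              hC_gen0 i j hd1 hdm1 hd2 hdm2, map_zero, neg_zero]
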